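/- Let Γ be a finite connected bipartite graph with ordered bipartition (B|B') such that the adjacency design D(Γ) is affine, and let G ≤ Aut(Γ) fix B and B' setwise. Then the following are equivalent: (i) G is transitive on B and on B' and, for every vertex x of Γ and every 1 ≤ i ≤ 4, the stabiliser G_x is transitive on the set Γ_i(x) of vertices at distance i from x (a condition vacuous when Γ_i(x) is empty); (ii) D(Γ) is G-pairwise transitive. -/

import Mathlib

open SimpleGraph

section Prelude

variable {V : Type*}

/-- `g` is an automorphism of the graph `Γ`. -/
def IsGraphAut (Γ : SimpleGraph V) (g : Equiv.Perm V) : Prop :=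
  ∀ u v : V, Γ.Adj (g u) (g v) ↔ Γ.Adj u v

/-- `(B | Bᶜ)` is an (ordered) bipartition of `Γ`: every edge joins `B` and `Bᶜ`. -/
def IsBipartition (Γ : SimpleGraph V) (B : Set V) : Prop :=
  ∀ u v : V, Γ.Adj u v → (u ∈ B ↔ v ∉ B)

/-- The orbit of `x` under a subgroup `N` of permutations of `V`. -/
def POrbit (N : Subgroup (Equiv.Perm V)) (x : V) : Set V :=
  {y | ∃ n ∈ N, n x = y}

/-- `Γ` is locally `(G,s)`-distance transitive: the diameter is at least `s` and for
every vertex `v` and every `1 ≤ i ≤ s` the stabiliser of `v` in `G` is transitive on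
the set of vertices at distance `i` from `v`. -/
def LocallyDistTrans (Γ : SimpleGraph V) (G : Subgroup (Equiv.Perm V)) (s : ℕ) : Prop :=
  s ≤ Γ.diam ∧
    ∀ (v x y : V) (i : ℕ), 1 ≤ i → i ≤ s → Γ.dist v x = i → Γ.dist v y = i →
      ∃ g ∈ G, g v = v ∧ g x = y

/-- `Γ`, bipartite with ordered bipartition `(B | Bᶜ)`, is `r`-starlike relative to `N`:
`N` leaves `B` invariant, is transitive on `B`, and has exactly `r` orbits on `Bᶜ`. -/
def IsStarlike (Γ : SimpleGraph V) (B : Set V) (N : Subgroup (Equiv.Perm V)) (r : ℕ) : Prop :=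
  (∀ n ∈ N, ∀ v : V, n v ∈ B ↔ v ∈ B) ∧
    (∀ x ∈ B, ∀ y ∈ B, ∃ n ∈ N, n x = y) ∧
    {S : Set V | ∃ x ∈ Bᶜ, S = POrbit N x}.ncard = r

/-- `G` is transitive on the set `S` of (ordered) pairs. -/
def PairTrans (G : Subgroup (Equiv.Perm V)) (S : Set (V × V)) : Prop :=
  ∀ p ∈ S, ∀ q ∈ S, ∃ g ∈ G, g p.1 = q.1 ∧ g p.2 = q.2

/-- The adjacency design of the bipartite graph `Γ` with ordered bipartition `(B | Bᶜ)`
(points `B`, blocks `Bᶜ`, incidence = adjacency) is `G`-pairwise transitive. -/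
def AdjPT (Γ : SimpleGraph V) (B : Set V) (G : Subgroup (Equiv.Perm V)) : Prop :=
  (∀ g ∈ G, ∀ v : V, g v ∈ B ↔ v ∈ B) ∧
  PairTrans G {p | p.1 ∈ B ∧ p.2 ∈ Bᶜ ∧ Γ.Adj p.1 p.2} ∧
  PairTrans G {p | p.1 ∈ B ∧ p.2 ∈ Bᶜ ∧ ¬ Γ.Adj p.1 p.2} ∧
  PairTrans G {p | p.1 ∈ B ∧ p.2 ∈ B ∧ p.1 ≠ p.2 ∧ ∃ b ∈ Bᶜ, Γ.Adj p.1 b ∧ Γ.Adj p.2 b} ∧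
  PairTrans G {p | p.1 ∈ B ∧ p.2 ∈ B ∧ p.1 ≠ p.2 ∧ ¬ ∃ b ∈ Bᶜ, Γ.Adj p.1 b ∧ Γ.Adj p.2 b} ∧
  PairTrans G {p | p.1 ∈ Bᶜ ∧ p.2 ∈ Bᶜ ∧ p.1 ≠ p.2 ∧ ∃ x ∈ B, Γ.Adj x p.1 ∧ Γ.Adj x p.2} ∧
  PairTrans G {p | p.1 ∈ Bᶜ ∧ p.2 ∈ Bᶜ ∧ p.1 ≠ p.2 ∧ ¬ ∃ x ∈ B, Γ.Adj x p.1 ∧ Γ.Adj x p.2}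

/-- The adjacency design of `Γ` (points `B`, blocks `Bᶜ`) is `N`-nicely affine:
`N` acts as automorphisms preserving the biparts, transitively on points, and there is a
constant `μ` such that distinct blocks in different `N`-orbits have exactly `μ` common
points, while distinct blocks in the same `N`-orbit have no common point. -/
def AdjNA (Γ : SimpleGraph V) (B : Set V) (N : Subgroup (Equiv.Perm V)) : Prop :=
  (∀ n ∈ N, ∀ v : V, n v ∈ B ↔ v ∈ B) ∧
  (∀ x ∈ B, ∀ y ∈ B, ∃ n ∈ N, n x = y) ∧
  ∃ μ : ℕ, ∀ b ∈ Bᶜ, ∀ b' ∈ Bᶜ, b ≠ b' →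
    ((b' ∈ POrbit N b → ¬ ∃ x, Γ.Adj x b ∧ Γ.Adj x b') ∧
     (b' ∉ POrbit N b → {x | Γ.Adj x b ∧ Γ.Adj x b'}.ncard = μ))

/-- The adjacency design of `Γ` (points `B`, blocks `Bᶜ`) is affine: the blocks can be
partitioned into parallel classes, and there is a positive constant `μ` such that blocks
in distinct parallel classes have exactly `μ` common points. -/
def AdjAffine (Γ : SimpleGraph V) (B : Set V) : Prop :=
  ∃ 𝓒 : Set (Set V), (∀ C ∈ 𝓒, C ⊆ Bᶜ) ∧ (∀ b ∈ Bᶜ, ∃! C, C ∈ 𝓒 ∧ b ∈ C) ∧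
    (∀ C ∈ 𝓒, ∀ x ∈ B, ∃! b, b ∈ C ∧ Γ.Adj x b) ∧
    ∃ μ : ℕ, 0 < μ ∧ ∀ C ∈ 𝓒, ∀ C' ∈ 𝓒, C ≠ C' → ∀ b ∈ C, ∀ b' ∈ C',
      {x | Γ.Adj x b ∧ Γ.Adj x b'}.ncard = μ

end Prelude

section DesignPrelude

variable {P L : Type*}

/-- The design `(P, L, I)` is `G`-pairwise transitive. -/
def DesignPT (I : P → L → Prop) (G : Type*) [Group G] [MulAction G P] [MulAction G L] :
    Prop :=
  (∀ (x : P) (b : L) (x' : P) (b' : L), I x b → I x' b' →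
      ∃ g : G, g • x = x' ∧ g • b = b') ∧
  (∀ (x : P) (b : L) (x' : P) (b' : L), ¬ I x b → ¬ I x' b' →
      ∃ g : G, g • x = x' ∧ g • b = b') ∧
  (∀ x y x' y' : P, x ≠ y → x' ≠ y' → (∃ b, I x b ∧ I y b) → (∃ b, I x' b ∧ I y' b) →
      ∃ g : G, g • x = x' ∧ g • y = y') ∧
  (∀ x y x' y' : P, x ≠ y → x' ≠ y' → ¬ (∃ b, I x b ∧ I y b) → ¬ (∃ b, I x' b ∧ I y' b) →
      ∃ g : G, g • x = x' ∧ g • y = y') ∧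
  (∀ b c b' c' : L, b ≠ c → b' ≠ c' → (∃ x, I x b ∧ I x c) → (∃ x, I x b' ∧ I x c') →
      ∃ g : G, g • b = b' ∧ g • c = c') ∧
  (∀ b c b' c' : L, b ≠ c → b' ≠ c' → ¬ (∃ x, I x b ∧ I x c) → ¬ (∃ x, I x b' ∧ I x c') →
      ∃ g : G, g • b = b' ∧ g • c = c')

/-- The design `(P, L, I)` is `N`-nicely affine for the subgroup `N` of `G`. -/
def DesignNA (I : P → L → Prop) (G : Type*) [Group G] [MulAction G P] [MulAction G L]
    (N : Subgroup G) : Prop :=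
  (∀ x y : P, ∃ n ∈ N, n • x = y) ∧
  ∃ μ : ℕ, ∀ b b' : L, b ≠ b' →
    (((∃ n ∈ N, n • b = b') → ¬ ∃ x, I x b ∧ I x b') ∧
     ((¬ ∃ n ∈ N, n • b = b') → {x | I x b ∧ I x b'}.ncard = μ))

/-- The incidence graph of the design `(P, L, I)`. -/
def DIncGraph (I : P → L → Prop) : SimpleGraph (P ⊕ L) :=
  SimpleGraph.fromRel (fun a b => ∃ x s, a = Sum.inl x ∧ b = Sum.inr s ∧ I x s)

end DesignPrelude

section SetDesign

variable {V : Type*}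

/-- Pairwise transitivity for a design whose points are the elements of `V`, whose
blocks are the members of `𝓑` (identified with their point-sets) and whose
incidence relation is membership; `G` is a group of permutations of `V`. -/
def SetPT (𝓑 : Set (Set V)) (G : Subgroup (Equiv.Perm V)) : Prop :=
  (∀ x : V, ∀ s ∈ 𝓑, ∀ x' : V, ∀ s' ∈ 𝓑, x ∈ s → x' ∈ s' →
      ∃ g ∈ G, g x = x' ∧ (fun z => g z) '' s = s') ∧
  (∀ x : V, ∀ s ∈ 𝓑, ∀ x' : V, ∀ s' ∈ 𝓑, x ∉ s → x' ∉ s' →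
      ∃ g ∈ G, g x = x' ∧ (fun z => g z) '' s = s') ∧
  (∀ x y x' y' : V, x ≠ y → x' ≠ y' → (∃ s ∈ 𝓑, x ∈ s ∧ y ∈ s) → (∃ s ∈ 𝓑, x' ∈ s ∧ y' ∈ s) →
      ∃ g ∈ G, g x = x' ∧ g y = y') ∧
  (∀ x y x' y' : V, x ≠ y → x' ≠ y' → ¬ (∃ s ∈ 𝓑, x ∈ s ∧ y ∈ s) → ¬ (∃ s ∈ 𝓑, x' ∈ s ∧ y' ∈ s) →
      ∃ g ∈ G, g x = x' ∧ g y = y') ∧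
  (∀ s ∈ 𝓑, ∀ t ∈ 𝓑, ∀ s' ∈ 𝓑, ∀ t' ∈ 𝓑, s ≠ t → s' ≠ t' →
      (s ∩ t).Nonempty → (s' ∩ t').Nonempty →
      ∃ g ∈ G, (fun z => g z) '' s = s' ∧ (fun z => g z) '' t = t') ∧
  (∀ s ∈ 𝓑, ∀ t ∈ 𝓑, ∀ s' ∈ 𝓑, ∀ t' ∈ 𝓑, s ≠ t → s' ≠ t' →
      s ∩ t = ∅ → s' ∩ t' = ∅ →
      ∃ g ∈ G, (fun z => g z) '' s = s' ∧ (fun z => g z) '' t = t')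

/-- Nice affineness for a design with point set `V`, blocks `𝓑` (point-sets) and
incidence given by membership, relative to a permutation group `N`. -/
def SetNA (𝓑 : Set (Set V)) (N : Subgroup (Equiv.Perm V)) : Prop :=
  (∀ x y : V, ∃ n ∈ N, n x = y) ∧
  (∀ n ∈ N, ∀ s ∈ 𝓑, (fun z => n z) '' s ∈ 𝓑) ∧
  ∃ μ : ℕ, ∀ s ∈ 𝓑, ∀ s' ∈ 𝓑, s ≠ s' →
    (((∃ n ∈ N, (fun z => n z) '' s = s') → s ∩ s' = ∅) ∧
     ((¬ ∃ n ∈ N, (fun z => n z) '' s = s') → (s ∩ s').ncard = μ))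

end SetDesign

section QuotientGraph

variable {V : Type*}

/-- The setoid on vertices whose classes are the `N`-orbits. -/
def orbitSetoid (N : Subgroup (Equiv.Perm V)) : Setoid V where
  r x y := ∃ n ∈ N, n x = y
  iseqv := by
    refine ⟨fun x => ⟨1, N.one_mem, rfl⟩, ?_, ?_⟩
    · rintro x y ⟨n, hn, rfl⟩
      exact ⟨n⁻¹, N.inv_mem hn, by simp⟩
    · rintro x y z ⟨n, hn, rfl⟩ ⟨m, hm, rfl⟩
      exact ⟨m * n, N.mul_mem hm hn, rfl⟩

/-- The normal quotient graph `Γ_N`: vertices are the `N`-orbits, two distinct orbits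
being adjacent iff some vertex of one is adjacent to some vertex of the other. -/
def quotGraph (Γ : SimpleGraph V) (N : Subgroup (Equiv.Perm V)) :
    SimpleGraph (Quotient (orbitSetoid N)) :=
  SimpleGraph.fromRel (fun a b => ∃ x y : V, Γ.Adj x y ∧
    Quotient.mk (orbitSetoid N) x = a ∧ Quotient.mk (orbitSetoid N) y = b)

end QuotientGraph

section Subdivision

variable {W : Type*}

/-- The subdivision graph `S(Σ)` of a graph `Σ`: vertices are `EΣ ⊕ VΣ`, an edge
being adjacent to its endpoints. -/
def SubdivisionGraph (Sg : SimpleGraph W) : SimpleGraph (↥Sg.edgeSet ⊕ W) :=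
  SimpleGraph.fromRel (fun a b => ∃ (e : Sg.edgeSet) (w : W),
    a = Sum.inl e ∧ b = Sum.inr w ∧ w ∈ (e : Sym2 W))

/-- The graph on `B'` in which two vertices are adjacent iff they are at distance `2`
in `Γ`. -/
def distTwoGraph (Γ : SimpleGraph W) (B' : Set W) : SimpleGraph ↥B' where
  Adj a b := Γ.dist ↑a ↑b = 2
  symm := by
    refine ⟨fun a b (h : Γ.dist ↑a ↑b = 2) => (?_ : Γ.dist ↑b ↑a = 2)⟩
    rwa [SimpleGraph.dist_comm]
  loopless := by
    refine ⟨fun a (h : Γ.dist ↑a ↑a = 2) => ?_⟩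
    simp [SimpleGraph.dist_self] at h

/-- `f 0, f 1, …, f t` is a `t`-arc of `Sg`. -/
def IsArcOf (Sg : SimpleGraph W) (t : ℕ) (f : ℕ → W) : Prop :=
  (∀ i : ℕ, i < t → Sg.Adj (f i) (f (i + 1))) ∧
  (∀ i : ℕ, 1 ≤ i → i + 1 ≤ t → f (i - 1) ≠ f (i + 1))

end Subdivision

/-!
If the adjacency design is affine, every point is within distance `3` of every block: a block
of the parallel class `C` meets each block of any other class in `μ > 0` points, and every point
lies on a block of that other class (with a single class, connectedness makes `Γ` a star).
So `Γ` has diameter at most `4`, and by bipartite parity the six pair sets of pairwise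
transitivity are exactly the pairs at distance `1` and `3` (point, block) and at distance `2`
and `4` (two points, or two blocks). Both conditions therefore say that `G` is transitive on
the pairs at each distance `i ≤ 4` whose first entry lies in a given bipart.
-/

namespace SimpleGraph

variable {V W : Type*} {G : SimpleGraph V} {G' : SimpleGraph W} {u v : V}

lemma Hom.edist_map_le (f : G →g G') (u v : V) : G'.edist (f u) (f v) ≤ G.edist u v := by
  by_cases h : G.Reachable u v
  · obtain ⟨p, hp⟩ := h.exists_walk_length_eq_edist
    rw [← hp, ← Walk.length_map f p]
    exact edist_le _
  · simp [edist_eq_top_of_not_reachable h]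

lemma Iso.edist_eq (φ : G ≃g G') (u v : V) : G'.edist (φ u) (φ v) = G.edist u v := by
  refine le_antisymm (φ.toHom.edist_map_le u v) ?_
  simpa using φ.symm.toHom.edist_map_le (φ u) (φ v)

lemma Iso.dist_eq (φ : G ≃g G') (u v : V) : G'.dist (φ u) (φ v) = G.dist u v := by
  rw [dist, dist, φ.edist_eq]

lemma dist_eq_two_iff :
    G.dist u v = 2 ↔ u ≠ v ∧ ¬G.Adj u v ∧ ∃ w, G.Adj u w ∧ G.Adj w v := by
  rw [dist, ENat.toNat_eq_iff two_ne_zero, Nat.cast_ofNat, edist_eq_two_iff]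
  simp only [Set.Nonempty, mem_commonNeighbors, G.adj_comm v]

lemma Reachable.mem_of_adj_closed {S : Set V} (h : G.Reachable u v)
    (hS : ∀ ⦃x y⦄, x ∈ S → G.Adj x y → y ∈ S) (hu : u ∈ S) : v ∈ S := by
  obtain ⟨p⟩ := h
  induction p with
  | nil => exact hu
  | cons hxy _ ih => exact ih (hS hu hxy)

end SimpleGraph

section

variable {V : Type*} {Γ : SimpleGraph V} {B : Set V} {G : Subgroup (Equiv.Perm V)}

def IsGraphAut.toIso {g : Equiv.Perm V} (hg : IsGraphAut Γ g) : Γ ≃g Γ :=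
  ⟨g, hg _ _⟩

def distPairs (Γ : SimpleGraph V) (S : Set V) (i : ℕ) : Set (V × V) :=
  {p | p.1 ∈ S ∧ Γ.dist p.1 p.2 = i}

namespace IsBipartition

lemma mem_compl_of_adj (hbip : IsBipartition Γ B) {u w : V} (hu : u ∈ B) (h : Γ.Adj u w) :
    w ∈ Bᶜ :=
  (hbip u w h).mp hu

lemma mem_of_adj (hbip : IsBipartition Γ B) {u w : V} (hu : u ∈ Bᶜ) (h : Γ.Adj u w) :
    w ∈ B :=
  not_not.mp fun hw => hu ((hbip u w h).mpr hw)

lemma not_adj_of_mem_iff (hbip : IsBipartition Γ B) {u v : V} (huv : u ∈ B ↔ v ∈ B) :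
    ¬Γ.Adj u v := fun h => by
  have := hbip u v h
  tauto

lemma even_length_iff (hbip : IsBipartition Γ B) {u v : V} (p : Γ.Walk u v) :
    Even p.length ↔ (u ∈ B ↔ v ∈ B) := by
  induction p with
  | nil => simp
  | cons h p ih =>
    rw [Walk.length_cons, Nat.even_add_one, ih]
    have := hbip _ _ h
    tauto

lemma even_dist_iff (hbip : IsBipartition Γ B) {u v : V} (h : Γ.Reachable u v) :
    Even (Γ.dist u v) ↔ (u ∈ B ↔ v ∈ B) := by
  obtain ⟨p, hp⟩ := h.exists_walk_length_eq_dist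
  rw [← hp, hbip.even_length_iff p]

lemma setOf_adj_eq_distPairs_one (hbip : IsBipartition Γ B) :
    {p : V × V | p.1 ∈ B ∧ p.2 ∈ Bᶜ ∧ Γ.Adj p.1 p.2} = distPairs Γ B 1 := by
  ext ⟨x, b⟩
  simp only [distPairs, Set.mem_ofPred_eq, dist_eq_one_iff_adj]
  exact ⟨fun ⟨hx, _, h⟩ => ⟨hx, h⟩,
    fun ⟨hx, h⟩ => ⟨hx, hbip.mem_compl_of_adj hx h, h⟩⟩

lemma setOf_collinear_eq_distPairs_two (hbip : IsBipartition Γ B) :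
    {p : V × V | p.1 ∈ B ∧ p.2 ∈ B ∧ p.1 ≠ p.2 ∧
      ∃ b ∈ Bᶜ, Γ.Adj p.1 b ∧ Γ.Adj p.2 b} =
      distPairs Γ B 2 := by
  ext ⟨x, y⟩
  simp only [distPairs, Set.mem_ofPred_eq, dist_eq_two_iff]
  constructor
  · rintro ⟨hx, hy, hne, b, -, hxb, hyb⟩
    exact ⟨hx, hne, hbip.not_adj_of_mem_iff (iff_of_true hx hy), b, hxb, hyb.symm⟩
  · rintro ⟨hx, hne, -, b, hxb, hby⟩
    have hb := hbip.mem_compl_of_adj hx hxb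
    exact ⟨hx, hbip.mem_of_adj hb hby, hne, b, hb, hxb, hby.symm⟩

lemma setOf_intersecting_eq_distPairs_two (hbip : IsBipartition Γ B) :
    {p : V × V | p.1 ∈ Bᶜ ∧ p.2 ∈ Bᶜ ∧ p.1 ≠ p.2 ∧
      ∃ x ∈ B, Γ.Adj x p.1 ∧ Γ.Adj x p.2} =
      distPairs Γ Bᶜ 2 := by
  ext ⟨b, c⟩
  simp only [distPairs, Set.mem_ofPred_eq, dist_eq_two_iff]
  constructor
  · rintro ⟨hb, hc, hne, x, -, hxb, hxc⟩
    exact ⟨hb, hne, hbip.not_adj_of_mem_iff (iff_of_false hb hc), x, hxb.symm, hxc⟩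
  · rintro ⟨hb, hne, -, x, hbx, hxc⟩
    have hx := hbip.mem_of_adj hb hbx
    exact ⟨hb, hbip.mem_compl_of_adj hx hxc, hne, x, hx, hbx.symm, hxc⟩

lemma pairTrans_distPairs_compl (hbip : IsBipartition Γ B) (hconn : Γ.Preconnected) {i : ℕ}
    (hi : Odd i) (h : PairTrans G (distPairs Γ B i)) : PairTrans G (distPairs Γ Bᶜ i) := by
  have hswap : ∀ p ∈ distPairs Γ Bᶜ i, p.swap ∈ distPairs Γ B i := by
    rintro ⟨u, v⟩ ⟨hu, huv⟩
    have hside : ¬(u ∈ B ↔ v ∈ B) := by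
      rw [← hbip.even_dist_iff (hconn u v), huv, Nat.not_even_iff_odd]
      exact hi
    exact ⟨by simp_all, by rwa [dist_comm]⟩
  intro p hp q hq
  obtain ⟨g, hg, h₁, h₂⟩ := h _ (hswap p hp) _ (hswap q hq)
  exact ⟨g, hg, h₂, h₁⟩

end IsBipartition

namespace AdjAffine

lemma dist_le_three_of_mem_of_mem_compl (haff : AdjAffine Γ B) (hconn : Γ.Connected)
    (hbip : IsBipartition Γ B) {x b : V} (hx : x ∈ B) (hb : b ∈ Bᶜ) : Γ.dist x b ≤ 3 := by
  obtain ⟨𝓒, -, hclass, hblock, μ, hμ, hmeet⟩ := haff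
  obtain ⟨C, ⟨hC, hbC⟩, -⟩ := hclass b hb
  by_cases hother : ∃ C' ∈ 𝓒, C' ≠ C
  · obtain ⟨C', hC', hne⟩ := hother
    obtain ⟨b', ⟨hb'C', hxb'⟩, -⟩ := hblock C' hC' x hx
    obtain ⟨y, hyb', hyb⟩ : {y | Γ.Adj y b' ∧ Γ.Adj y b}.Nonempty :=
      Set.nonempty_of_ncard_ne_zero (by rw [hmeet C' hC' C hC hne b' hb'C' b hbC]; omega)
    simpa using dist_le (.cons hxb' (.cons hyb'.symm (.cons hyb .nil)))
  push Not at hother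
  -- each point lies on exactly one block, so `b` and its points form a connected component
  have hstar : ∀ ⦃u w⦄, u = b ∨ Γ.Adj u b → Γ.Adj u w → w = b ∨ Γ.Adj w b := by
    rintro u w (rfl | hub) huw
    · exact Or.inr huw.symm
    · have hu := hbip.mem_of_adj hb hub.symm
      obtain ⟨Cw, ⟨hCw, hwCw⟩, -⟩ := hclass w (hbip.mem_compl_of_adj hu huw)
      rw [hother Cw hCw] at hwCw
      exact Or.inl ((hblock C hC u hu).unique ⟨hwCw, huw⟩ ⟨hbC, hub⟩)
  rcases (hconn b x).mem_of_adj_closed (S := {v | v = b ∨ Γ.Adj v b}) hstar (Or.inl rfl)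
    with rfl | hxb
  · exact absurd hx hb
  · rw [dist_eq_one_iff_adj.mpr hxb]
    omega

lemma dist_le_three (haff : AdjAffine Γ B) (hconn : Γ.Connected) (hbip : IsBipartition Γ B)
    {u v : V} (hside : ¬(u ∈ B ↔ v ∈ B)) : Γ.dist u v ≤ 3 := by
  by_cases hu : u ∈ B
  · exact haff.dist_le_three_of_mem_of_mem_compl hconn hbip hu (by tauto)
  · rw [dist_comm]
    exact haff.dist_le_three_of_mem_of_mem_compl hconn hbip (by tauto) hu

lemma dist_le_four (haff : AdjAffine Γ B) (hconn : Γ.Connected) (hbip : IsBipartition Γ B)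
    (u v : V) : Γ.dist u v ≤ 4 := by
  by_cases hside : u ∈ B ↔ v ∈ B
  · rcases eq_or_ne u v with rfl | hne
    · simp
    have := nontrivial_of_ne u v hne
    obtain ⟨w, huw⟩ := hconn.preconnected.exists_adj_of_nontrivial u
    have hw : ¬(w ∈ B ↔ v ∈ B) := fun h => hbip.not_adj_of_mem_iff (hside.trans h.symm) huw
    calc Γ.dist u v ≤ Γ.dist u w + Γ.dist w v := hconn.dist_triangle
      _ ≤ 1 + 3 := add_le_add (dist_eq_one_iff_adj.mpr huw).le (haff.dist_le_three hconn hbip hw)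
  · exact (haff.dist_le_three hconn hbip hside).trans (by norm_num)

lemma dist_eq_three_iff (haff : AdjAffine Γ B) (hconn : Γ.Connected) (hbip : IsBipartition Γ B)
    {u v : V} (hside : ¬(u ∈ B ↔ v ∈ B)) : Γ.dist u v = 3 ↔ ¬Γ.Adj u v := by
  refine ⟨fun h hadj => by simp [dist_eq_one_iff_adj.mpr hadj] at h, fun hnadj => ?_⟩
  have hodd : ¬Even (Γ.dist u v) := by rwa [hbip.even_dist_iff (hconn u v)]
  have h1 : Γ.dist u v ≠ 1 := fun h => hnadj (dist_eq_one_iff_adj.mp h)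
  have h3 := haff.dist_le_three hconn hbip hside
  rw [Nat.even_iff] at hodd
  omega

lemma dist_eq_four_iff (haff : AdjAffine Γ B) (hconn : Γ.Connected) (hbip : IsBipartition Γ B)
    {u v : V} (hside : u ∈ B ↔ v ∈ B) :
    Γ.dist u v = 4 ↔ u ≠ v ∧ ¬∃ w, Γ.Adj u w ∧ Γ.Adj w v := by
  constructor
  · intro h
    refine ⟨by rintro rfl; simp at h, fun ⟨w, huw, hwv⟩ => ?_⟩
    have := dist_le (.cons huw (.cons hwv .nil))
    simp only [Walk.length_cons, Walk.length_nil] at this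
    omega
  · rintro ⟨hne, hnc⟩
    have heven : Even (Γ.dist u v) := (hbip.even_dist_iff (hconn u v)).mpr hside
    have h0 : Γ.dist u v ≠ 0 := (hconn.pos_dist_of_ne hne).ne'
    have h2 : Γ.dist u v ≠ 2 := fun h => hnc (dist_eq_two_iff.mp h).2.2
    have h4 := haff.dist_le_four hconn hbip u v
    rw [Nat.even_iff] at heven
    omega

lemma setOf_not_adj_eq_distPairs_three (haff : AdjAffine Γ B) (hconn : Γ.Connected)
    (hbip : IsBipartition Γ B) :
    {p : V × V | p.1 ∈ B ∧ p.2 ∈ Bᶜ ∧ ¬Γ.Adj p.1 p.2} = distPairs Γ B 3 := by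
  ext ⟨x, b⟩
  simp only [distPairs, Set.mem_ofPred_eq]
  constructor
  · rintro ⟨hx, hb, hnadj⟩
    exact ⟨hx, (haff.dist_eq_three_iff hconn hbip fun h => hb (h.mp hx)).mpr hnadj⟩
  · rintro ⟨hx, h⟩
    have hside : ¬(x ∈ B ↔ b ∈ B) := by
      rw [← hbip.even_dist_iff (hconn x b), h, Nat.not_even_iff_odd]
      exact ⟨1, rfl⟩
    exact ⟨hx, fun hb => hside (iff_of_true hx hb),
      (haff.dist_eq_three_iff hconn hbip hside).mp h⟩

lemma setOf_not_collinear_eq_distPairs_four (haff : AdjAffine Γ B) (hconn : Γ.Connected)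
    (hbip : IsBipartition Γ B) :
    {p : V × V | p.1 ∈ B ∧ p.2 ∈ B ∧ p.1 ≠ p.2 ∧
      ¬∃ b ∈ Bᶜ, Γ.Adj p.1 b ∧ Γ.Adj p.2 b} =
      distPairs Γ B 4 := by
  ext ⟨x, y⟩
  simp only [distPairs, Set.mem_ofPred_eq]
  constructor
  · rintro ⟨hx, hy, hne, hnc⟩
    refine ⟨hx, (haff.dist_eq_four_iff hconn hbip (iff_of_true hx hy)).mpr ⟨hne, ?_⟩⟩
    rintro ⟨b, hxb, hby⟩
    exact hnc ⟨b, hbip.mem_compl_of_adj hx hxb, hxb, hby.symm⟩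
  · rintro ⟨hx, h⟩
    have hy : y ∈ B := ((hbip.even_dist_iff (hconn x y)).mp (h ▸ ⟨2, rfl⟩)).mp hx
    obtain ⟨hne, hnc⟩ := (haff.dist_eq_four_iff hconn hbip (iff_of_true hx hy)).mp h
    exact ⟨hx, hy, hne, fun ⟨b, _, hxb, hyb⟩ => hnc ⟨b, hxb, hyb.symm⟩⟩

lemma setOf_not_intersecting_eq_distPairs_four (haff : AdjAffine Γ B) (hconn : Γ.Connected)
    (hbip : IsBipartition Γ B) :
    {p : V × V | p.1 ∈ Bᶜ ∧ p.2 ∈ Bᶜ ∧ p.1 ≠ p.2 ∧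
      ¬∃ x ∈ B, Γ.Adj x p.1 ∧ Γ.Adj x p.2} =
      distPairs Γ Bᶜ 4 := by
  ext ⟨b, c⟩
  simp only [distPairs, Set.mem_ofPred_eq]
  constructor
  · rintro ⟨hb, hc, hne, hnc⟩
    refine ⟨hb, (haff.dist_eq_four_iff hconn hbip (iff_of_false hb hc)).mpr ⟨hne, ?_⟩⟩
    rintro ⟨x, hbx, hxc⟩
    exact hnc ⟨x, hbip.mem_of_adj hb hbx, hbx.symm, hxc⟩
  · rintro ⟨hb, h⟩
    have hc : c ∈ Bᶜ := fun hc =>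
      hb (((hbip.even_dist_iff (hconn b c)).mp (h ▸ ⟨2, rfl⟩)).mpr hc)
    obtain ⟨hne, hnc⟩ := (haff.dist_eq_four_iff hconn hbip (iff_of_false hb hc)).mp h
    exact ⟨hb, hc, hne, fun ⟨x, _, hxb, hxc⟩ => hnc ⟨x, hxb.symm, hxc⟩⟩

lemma adjPT_iff (haff : AdjAffine Γ B) (hconn : Γ.Connected) (hbip : IsBipartition Γ B) :
    AdjPT Γ B G ↔ (∀ g ∈ G, ∀ v : V, g v ∈ B ↔ v ∈ B) ∧
      PairTrans G (distPairs Γ B 1) ∧ PairTrans G (distPairs Γ B 3) ∧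
      PairTrans G (distPairs Γ B 2) ∧ PairTrans G (distPairs Γ B 4) ∧
      PairTrans G (distPairs Γ Bᶜ 2) ∧ PairTrans G (distPairs Γ Bᶜ 4) := by
  rw [AdjPT, hbip.setOf_adj_eq_distPairs_one, haff.setOf_not_adj_eq_distPairs_three hconn hbip,
    hbip.setOf_collinear_eq_distPairs_two, haff.setOf_not_collinear_eq_distPairs_four hconn hbip,
    hbip.setOf_intersecting_eq_distPairs_two,
    haff.setOf_not_intersecting_eq_distPairs_four hconn hbip]

end AdjAffine

lemma pairTrans_distPairs {S : Set V} {i : ℕ}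
    (hdist : ∀ g ∈ G, ∀ u v, Γ.dist (g u) (g v) = Γ.dist u v)
    (htrans : ∀ x ∈ S, ∀ y ∈ S, ∃ g ∈ G, g x = y)
    (hstab : ∀ x y z, Γ.dist x y = i → Γ.dist x z = i → ∃ g ∈ G, g x = x ∧ g y = z) :
    PairTrans G (distPairs Γ S i) := by
  rintro ⟨x, y⟩ ⟨hx, hxy⟩ ⟨x', y'⟩ ⟨hx', hxy'⟩
  obtain ⟨g, hg, rfl⟩ := htrans x hx x' hx'
  obtain ⟨h, hh, hfix, hmove⟩ := hstab (g x) (g y) y' (by rw [hdist g hg, hxy]) hxy'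
  exact ⟨h * g, G.mul_mem hh hg, hfix, hmove⟩

namespace PairTrans

lemma transitive_of_distPairs_one {S : Set V} (hconn : Γ.Preconnected)
    (h : PairTrans G (distPairs Γ S 1)) : ∀ x ∈ S, ∀ y ∈ S, ∃ g ∈ G, g x = y := by
  intro x hx y hy
  rcases eq_or_ne x y with rfl | hne
  · exact ⟨1, G.one_mem, rfl⟩
  have := nontrivial_of_ne x y hne
  obtain ⟨x', hxx'⟩ := hconn.exists_adj_of_nontrivial x
  obtain ⟨y', hyy'⟩ := hconn.exists_adj_of_nontrivial y
  obtain ⟨g, hg, hgx, -⟩ := h (x, x') ⟨hx, dist_eq_one_iff_adj.mpr hxx'⟩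
    (y, y') ⟨hy, dist_eq_one_iff_adj.mpr hyy'⟩
  exact ⟨g, hg, hgx⟩

lemma exists_fixing {i : ℕ} (hB : PairTrans G (distPairs Γ B i))
    (hBc : PairTrans G (distPairs Γ Bᶜ i)) {x y z : V} (hy : Γ.dist x y = i)
    (hz : Γ.dist x z = i) : ∃ g ∈ G, g x = x ∧ g y = z := by
  by_cases hx : x ∈ B
  · exact hB (x, y) ⟨hx, hy⟩ (x, z) ⟨hx, hz⟩
  · exact hBc (x, y) ⟨hx, hy⟩ (x, z) ⟨hx, hz⟩

end PairTrans

end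

theorem statement10_general {V : Type*} (Γ : SimpleGraph V) (B : Set V)
    (hconn : Γ.Connected) (hbip : IsBipartition Γ B)
    (G : Subgroup (Equiv.Perm V)) (hGaut : ∀ g ∈ G, IsGraphAut Γ g)
    (hGB : ∀ g ∈ G, ∀ v : V, g v ∈ B ↔ v ∈ B)
    (haff : AdjAffine Γ B) :
    ((∀ x ∈ B, ∀ y ∈ B, ∃ g ∈ G, g x = y) ∧
      (∀ x ∈ Bᶜ, ∀ y ∈ Bᶜ, ∃ g ∈ G, g x = y) ∧
      (∀ (x y z : V) (i : ℕ), 1 ≤ i → i ≤ 4 → Γ.dist x y = i → Γ.dist x z = i →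
        ∃ g ∈ G, g x = x ∧ g y = z)) ↔
    AdjPT Γ B G := by
  have hdist : ∀ g ∈ G, ∀ u v, Γ.dist (g u) (g v) = Γ.dist u v :=
    fun g hg => (hGaut g hg).toIso.dist_eq
  rw [haff.adjPT_iff hconn hbip]
  constructor
  · rintro ⟨hB, hBc, hstab⟩
    have hPT {S : Set V} (hS : ∀ x ∈ S, ∀ y ∈ S, ∃ g ∈ G, g x = y) (i : ℕ)
        (hi : 1 ≤ i ∧ i ≤ 4) : PairTrans G (distPairs Γ S i) :=
      pairTrans_distPairs hdist hS (hstab · · · i hi.1 hi.2)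
    exact ⟨hGB, hPT hB 1 (by decide), hPT hB 3 (by decide), hPT hB 2 (by decide),
      hPT hB 4 (by decide), hPT hBc 2 (by decide), hPT hBc 4 (by decide)⟩
  · rintro ⟨-, h1, h3, h2, h4, h2c, h4c⟩
    have h1c := hbip.pairTrans_distPairs_compl hconn.preconnected odd_one h1
    have h3c := hbip.pairTrans_distPairs_compl hconn.preconnected ⟨1, rfl⟩ h3
    refine ⟨h1.transitive_of_distPairs_one hconn.preconnected,
      h1c.transitive_of_distPairs_one hconn.preconnected, ?_⟩
    intro x y z i hi1 hi4 hy hz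
    interval_cases i
    exacts [h1.exists_fixing h1c hy hz, h2.exists_fixing h2c hy hz, h3.exists_fixing h3c hy hz,
      h4.exists_fixing h4c hy hz]

/-- **Proposition `4dist=PT`**.  Let `Γ` be a finite connected bipartite graph with
ordered bipartition `(B|Bᶜ)` whose adjacency design is affine, and let `G ≤ Aut Γ` fix
`B` and `Bᶜ` setwise.  Then `Γ` is locally `(G,4)`-distance transitive in the weak sense
(G transitive on each bipart and each vertex stabiliser transitive on each nonempty
distance-`i` set, `1 ≤ i ≤ 4`) if and only if `D(Γ)` is `G`-pairwise transitive. -/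
theorem statement10 {V : Type*} [Fintype V] (Γ : SimpleGraph V) (B : Set V)
    (hconn : Γ.Connected) (hbip : IsBipartition Γ B)
    (G : Subgroup (Equiv.Perm V)) (hGaut : ∀ g ∈ G, IsGraphAut Γ g)
    (hGB : ∀ g ∈ G, ∀ v : V, g v ∈ B ↔ v ∈ B)
    (haff : AdjAffine Γ B) :
    ((∀ x ∈ B, ∀ y ∈ B, ∃ g ∈ G, g x = y) ∧
      (∀ x ∈ Bᶜ, ∀ y ∈ Bᶜ, ∃ g ∈ G, g x = y) ∧
      (∀ (x y z : V) (i : ℕ), 1 ≤ i → i ≤ 4 → Γ.dist x y = i → Γ.dist x z = i →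
        ∃ g ∈ G, g x = x ∧ g y = z)) ↔
    AdjPT Γ B G :=
  statement10_general Γ B hconn hbip G hGaut hGB haff
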